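/- If the 2-step nilpotent metric Lie algebra satisfies [n,n] ⊆ U and E = {0}, then the curvature tensor R of the associated left-invariant connection vanishes identically: N is flat. -/

import Mathlib

/-!
Everything is pushed into the isotropic central subspace `U`. Brackets lie in `U` by hypothesis,
and `ad⁺_x y` is orthogonal to the centre `U ⊕ Z`, which (with `E = 0` and `U`, `V` isotropic)
forces it into `U`; hence `∇` takes values in `U`. An element `s ∈ U` is central and orthogonal
to `[n, n] ⊆ U`, so `[x, s]`, `ad⁺_s x` and `ad⁺_x s` all vanish: `∇` is zero as soon as one of
its arguments lies in `U`. Every term of `R(x, y) w` is of this form.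
-/

namespace LinearMap

variable {R M : Type*} [CommRing R] [AddCommGroup M] [Module R M]

theorem SeparatingLeft.eq_zero_of_sup_eq_top {B : LinearMap.BilinForm R M} (hB : B.SeparatingLeft)
    {P Q : Submodule R M} (hPQ : P ⊔ Q = ⊤) {s : M} (hP : ∀ p ∈ P, B s p = 0)
    (hQ : ∀ q ∈ Q, B s q = 0) : s = 0 := by
  have hker : P ⊔ Q ≤ ker (B s) := sup_le hP hQ
  exact hB s fun y => hker (hPQ ▸ Submodule.mem_top)

theorem SeparatingLeft.mem_of_forall_mem_sup_apply_eq_zero {B : LinearMap.BilinForm R M}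
    (hB : B.SeparatingLeft) (hBsymm : ∀ x y, B x y = B y x) {U Z V : Submodule R M}
    (hdecomp : U ⊔ Z ⊔ V = ⊤) (hUU : ∀ u ∈ U, ∀ u' ∈ U, B u u' = 0)
    (hVV : ∀ v ∈ V, ∀ v' ∈ V, B v v' = 0) (hUZ : ∀ u ∈ U, ∀ z ∈ Z, B u z = 0)
    (hVZ : ∀ v ∈ V, ∀ z ∈ Z, B v z = 0) {t : M} (ht : ∀ c ∈ U ⊔ Z, B t c = 0) : t ∈ U := by
  obtain ⟨a, ha, v, hv, rfl⟩ := Submodule.mem_sup.mp (hdecomp ▸ Submodule.mem_top : t ∈ U ⊔ Z ⊔ V)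
  obtain ⟨u, hu, z, hz, rfl⟩ := Submodule.mem_sup.mp ha
  have hu_perp : ∀ c ∈ U ⊔ Z, B u c = 0 := by
    intro c hc
    obtain ⟨u', hu', z', hz', rfl⟩ := Submodule.mem_sup.mp hc
    simp [hUU u hu u' hu', hUZ u hu z' hz']
  suffices z + v = 0 by rwa [add_assoc, this, add_zero]
  refine hB.eq_zero_of_sup_eq_top hdecomp (fun c hc => ?_) (fun v' hv' => ?_)
  · simpa [add_assoc, hu_perp c hc] using ht c hc
  · simp [hBsymm z, hVZ v' hv' z hz, hVV v hv v' hv']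

end LinearMap

section LieAlgebra

variable {R L : Type*} [CommRing R] [LieRing L] [LieAlgebra R L]
  {B : LinearMap.BilinForm R L} {adP : L →ₗ[R] L →ₗ[R] L}

theorem apply_adP_eq_zero_of_forall_lie_eq_zero (hadP : ∀ x y w, B (adP x y) w = B y ⁅x, w⁆)
    {c : L} (hc : ∀ w : L, ⁅c, w⁆ = 0) (x y : L) : B (adP x y) c = 0 := by
  rw [hadP, ← lie_skew, hc, neg_zero, map_zero]

theorem adP_eq_zero_of_forall_lie_eq_zero (hB : B.SeparatingLeft)
    (hadP : ∀ x y w, B (adP x y) w = B y ⁅x, w⁆) {c : L} (hc : ∀ w : L, ⁅c, w⁆ = 0) : adP c = 0 :=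
  LinearMap.ext fun y => hB _ fun w => by rw [hadP, hc, map_zero]

theorem adP_apply_eq_zero_of_forall_apply_lie_eq_zero (hB : B.SeparatingLeft)
    (hadP : ∀ x y w, B (adP x y) w = B y ⁅x, w⁆) {s : L} (hs : ∀ x w : L, B s ⁅x, w⁆ = 0) (x : L) :
    adP x s = 0 :=
  hB _ fun w => by rw [hadP, hs]

end LieAlgebra

section LeviCivita

variable {𝕜 L : Type*} [Field 𝕜] [LieRing L] [LieAlgebra 𝕜 L]
  {B : LinearMap.BilinForm 𝕜 L} {adP : L →ₗ[𝕜] L →ₗ[𝕜] L}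

/-- `adP x` stands for `ad⁺_x`, the `B`-adjoint of `ad_x`. -/
def leviCivita (adP : L →ₗ[𝕜] L →ₗ[𝕜] L) (x y : L) : L :=
  (2 : 𝕜)⁻¹ • (⁅x, y⁆ - adP x y - adP y x)

theorem leviCivita_mem {U : Submodule 𝕜 L} (hbr : ∀ x y : L, ⁅x, y⁆ ∈ U)
    (hadP : ∀ x y, adP x y ∈ U) (x y : L) : leviCivita adP x y ∈ U :=
  U.smul_mem _ (U.sub_mem (U.sub_mem (hbr x y) (hadP x y)) (hadP y x))

theorem leviCivita_eq_zero_left (hB : B.SeparatingLeft)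
    (hadP : ∀ x y w, B (adP x y) w = B y ⁅x, w⁆) {s : L} (hc : ∀ w : L, ⁅s, w⁆ = 0)
    (hs : ∀ x w : L, B s ⁅x, w⁆ = 0) (y : L) : leviCivita adP s y = 0 := by
  simp [leviCivita, hc y, adP_eq_zero_of_forall_lie_eq_zero hB hadP hc,
    adP_apply_eq_zero_of_forall_apply_lie_eq_zero hB hadP hs]

theorem leviCivita_eq_zero_right (hB : B.SeparatingLeft)
    (hadP : ∀ x y w, B (adP x y) w = B y ⁅x, w⁆) {s : L} (hc : ∀ w : L, ⁅s, w⁆ = 0)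
    (hs : ∀ x w : L, B s ⁅x, w⁆ = 0) (y : L) : leviCivita adP y s = 0 := by
  have hys : ⁅y, s⁆ = 0 := by rw [← lie_skew, hc, neg_zero]
  simp [leviCivita, hys, adP_eq_zero_of_forall_lie_eq_zero hB hadP hc,
    adP_apply_eq_zero_of_forall_apply_lie_eq_zero hB hadP hs]

end LeviCivita

/-- If the 2-step nilpotent metric Lie algebra satisfies `[n,n] ⊆ U` and `E = {0}`,
then the curvature tensor `R` of the associated left-invariant connection vanishes
identically: `N` is flat. -/
theorem flat_when_brackets_in_U_and_no_E
    {n : Type*} [LieRing n] [LieAlgebra ℝ n]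
    (B : LinearMap.BilinForm ℝ n) (hBsymm : ∀ x y : n, B x y = B y x)
    (hBnd : B.Nondegenerate)
    (U Z V E : Submodule ℝ n)
    (hcent : ∀ c ∈ U ⊔ Z, ∀ x : n, ⁅c, x⁆ = 0)
    (hdecomp : U ⊔ Z ⊔ V ⊔ E = ⊤)
    (hUU : ∀ u ∈ U, ∀ u' ∈ U, B u u' = 0)
    (hVV : ∀ v ∈ V, ∀ v' ∈ V, B v v' = 0)
    (hUZ : ∀ u ∈ U, ∀ z ∈ Z, B u z = 0)
    (hVZ : ∀ v ∈ V, ∀ z ∈ Z, B v z = 0)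
    (hbrU : ∀ x y : n, ⁅x, y⁆ ∈ U)
    (hE : E = ⊥)
    (adP : n →ₗ[ℝ] n →ₗ[ℝ] n)
    (hadP : ∀ x y w : n, B (adP x y) w = B y ⁅x, w⁆)
    (nabla : n → n → n)
    (hnabla : ∀ x y : n, nabla x y = (2:ℝ)⁻¹ • (⁅x, y⁆ - adP x y - adP y x))
    (R : n → n → n → n)
    (hR : ∀ x y w : n,
      R x y w = nabla x (nabla y w) - nabla y (nabla x w) - nabla ⁅x, y⁆ w) :
    ∀ x y w : n, R x y w = 0 := by
  rw [hE, sup_bot_eq] at hdecomp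
  have hadPU (x y : n) : adP x y ∈ U :=
    hBnd.1.mem_of_forall_mem_sup_apply_eq_zero hBsymm hdecomp hUU hVV hUZ hVZ fun c hc =>
      apply_adP_eq_zero_of_forall_lie_eq_zero hadP (hcent c hc) x y
  have hUcent (s : n) (hs : s ∈ U) : ∀ w : n, ⁅s, w⁆ = 0 := hcent s (Submodule.mem_sup_left hs)
  have hUperp (s : n) (hs : s ∈ U) (x w : n) : B s ⁅x, w⁆ = 0 := hUU s hs _ (hbrU x w)
  have hnablaU (x y : n) : nabla x y ∈ U := hnabla x y ▸ leviCivita_mem hbrU hadPU x y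
  have hnabla_left (s : n) (hs : s ∈ U) (w : n) : nabla s w = 0 :=
    hnabla s w ▸ leviCivita_eq_zero_left hBnd.1 hadP (hUcent s hs) (hUperp s hs) w
  have hnabla_right (x s : n) (hs : s ∈ U) : nabla x s = 0 :=
    hnabla x s ▸ leviCivita_eq_zero_right hBnd.1 hadP (hUcent s hs) (hUperp s hs) x
  intro x y w
  rw [hR, hnabla_right x _ (hnablaU y w), hnabla_right y _ (hnablaU x w),
    hnabla_left _ (hbrU x y) w, sub_zero, sub_zero]
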